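/- Mechanism 3 with parameter ε ∈ (0, 1/2) has social-cost approximation ratio at most (1/ε − 1)·(n − 1): for every profile x, its social cost is at most (1/ε − 1)·(n − 1)·OPT(x). -/

import Mathlib

/-!
For any three agents at `u, v, w`, every pair of facilities costs at least
`min (v - u) (w - v)`, so OPT is bounded below by such gaps. It suffices to bound the cost of
each non-dictator agent by `(1/ε - 1)·OPT`. If `x_t` is near the left end, its distance `a` to
that end is at most OPT; an agent to the right of `x_t` either lies between `x_t` and
`l2 = x_t + (2/ε - 2)·a`, paying at most `(1/ε - 1)·a`, or `l2` is the right end and the agent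
pays at most its smaller gap to `x_t` and to that end. The right end reduces to the left one by
reflection. If `x_t` is in the middle, OPT is at least `εL` while every agent is within `(1 - ε)L`
of `x_t`.
-/

noncomputable def cost2 (p : ℝ × ℝ) (y : ℝ) : ℝ := min |p.1 - y| |p.2 - y|

noncomputable def SC {n : ℕ} (p : ℝ × ℝ) (x : Fin n → ℝ) : ℝ := ∑ i, cost2 p (x i)

noncomputable def OPT {n : ℕ} (x : Fin n → ℝ) : ℝ :=
  sInf {c | ∃ l1 l2 : ℝ, c = SC (l1, l2) x}

/-- `p` is a possible output of Mechanism 3 with parameter `ε` and dictator `t`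
(extended to general profiles by translation and scaling).  With `x_l` the leftmost
location, `x_r` the rightmost and `L = x_r - x_l`: if `x_t` is within the first
`ε`-fraction, `l2 = x_t + max((2/ε - 2)(x_t - x_l), x_r - x_t)`; if within the last
`ε`-fraction, `l2 = x_t - max(x_t - x_l, (2/ε - 2)(x_r - x_t))`; otherwise `l2` is
an arbitrary point of `(-∞, x_l - L) ∪ (x_r + L, +∞)`. -/
def Mech3Out {n : ℕ} (ε : ℝ) (t : Fin n) (x : Fin n → ℝ) (p : ℝ × ℝ) : Prop :=
  let xl := Finset.univ.inf' ⟨t, Finset.mem_univ t⟩ x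
  let xr := Finset.univ.sup' ⟨t, Finset.mem_univ t⟩ x
  let L := xr - xl
  p.1 = x t ∧
  ((x t ≤ xl + ε * L ∧ p.2 = x t + max ((2 / ε - 2) * (x t - xl)) (xr - x t)) ∨
   (xl + (1 - ε) * L ≤ x t ∧ p.2 = x t - max (x t - xl) ((2 / ε - 2) * (xr - x t))) ∨
   (xl + ε * L < x t ∧ x t < xl + (1 - ε) * L ∧ (p.2 < xl - L ∨ xr + L < p.2)))

lemma cost2_nonneg (p : ℝ × ℝ) (y : ℝ) : 0 ≤ cost2 p y :=
  le_min (abs_nonneg _) (abs_nonneg _)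

lemma cost2_le_abs_sub_fst (p : ℝ × ℝ) (y : ℝ) : cost2 p y ≤ |p.1 - y| :=
  min_le_left _ _

lemma cost2_le_min_of_mem_Icc {l1 l2 y : ℝ} (h1 : l1 ≤ y) (h2 : y ≤ l2) :
    cost2 (l1, l2) y ≤ min (y - l1) (l2 - y) := by
  simp only [cost2, abs_sub_comm l1 y, abs_of_nonneg (sub_nonneg.2 h1),
    abs_of_nonneg (sub_nonneg.2 h2), le_refl]

lemma cost2_neg (l1 l2 y : ℝ) : cost2 (-l1, -l2) (-y) = cost2 (l1, l2) y := by
  simp only [cost2, neg_sub_neg, abs_sub_comm y]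

lemma cost2_fst (p : ℝ × ℝ) : cost2 p p.1 = 0 := by
  simp only [cost2, sub_self, abs_zero]
  exact min_eq_left (abs_nonneg _)

/-- Two of the three agents share a facility, and any two of them are at least
`min (v - u) (w - v)` apart. -/
lemma min_sub_le_cost2_add (p : ℝ × ℝ) (u v w : ℝ) :
    min (v - u) (w - v) ≤ cost2 p u + cost2 p v + cost2 p w := by
  obtain ⟨l1, l2⟩ := p
  have tri (l y z : ℝ) : z - y ≤ |l - y| + |l - z| := by
    linarith [le_abs_self (l - y), neg_abs_le (l - z)]
  simp only [cost2]
  rcases min_cases |l1 - u| |l2 - u| with ⟨eu, -⟩ | ⟨eu, -⟩ <;>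
  rcases min_cases |l1 - v| |l2 - v| with ⟨ev, -⟩ | ⟨ev, -⟩ <;>
  rcases min_cases |l1 - w| |l2 - w| with ⟨ew, -⟩ | ⟨ew, -⟩ <;>
  rw [eu, ev, ew] <;>
  linarith [min_le_left (v - u) (w - v), min_le_right (v - u) (w - v),
    tri l1 u v, tri l1 v w, tri l1 u w, tri l2 u v, tri l2 v w, tri l2 u w,
    abs_nonneg (l1 - u), abs_nonneg (l2 - u), abs_nonneg (l1 - v), abs_nonneg (l2 - v),
    abs_nonneg (l1 - w), abs_nonneg (l2 - w)]

lemma OPT_nonneg {n : ℕ} (x : Fin n → ℝ) : 0 ≤ OPT x :=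
  Real.sInf_nonneg <| by
    rintro c ⟨l1, l2, rfl⟩
    exact Finset.sum_nonneg fun i _ => cost2_nonneg _ _

lemma min_sub_le_OPT {n : ℕ} (x : Fin n → ℝ) (j k m : Fin n) :
    min (x k - x j) (x m - x k) ≤ OPT x := by
  classical
  by_cases hdist : j ≠ k ∧ j ≠ m ∧ k ≠ m
  · obtain ⟨hjk', hjm', hkm'⟩ := hdist
    refine le_csInf ⟨SC (0, 0) x, 0, 0, rfl⟩ ?_
    rintro c ⟨l1, l2, rfl⟩
    calc min (x k - x j) (x m - x k)
        ≤ cost2 (l1, l2) (x j) + cost2 (l1, l2) (x k) + cost2 (l1, l2) (x m) :=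
          min_sub_le_cost2_add _ _ _ _
      _ = ∑ i ∈ {j, k, m}, cost2 (l1, l2) (x i) := by
          rw [Finset.sum_insert (by simp [hjk', hjm']), Finset.sum_insert (by simp [hkm']),
            Finset.sum_singleton, add_assoc]
      _ ≤ SC (l1, l2) x :=
          Finset.sum_le_sum_of_subset_of_nonneg (Finset.subset_univ _)
            fun i _ _ => cost2_nonneg _ _
  · have hdeg : min (x k - x j) (x m - x k) ≤ 0 := by
      simp only [not_and_or, not_not] at hdist
      rcases hdist with rfl | rfl | rfl
      · exact min_le_of_left_le (sub_self _).le
      · linarith [min_le_left (x k - x j) (x j - x k), min_le_right (x k - x j) (x j - x k)]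
      · exact min_le_of_right_le (sub_self _).le
    exact hdeg.trans (OPT_nonneg x)

section Cases

variable {ε xl xt xr l2 y O : ℝ}

lemma cost2_le_of_near_left (hε0 : 0 < ε) (hε1 : ε < 1 / 2) (hxt : xl ≤ xt)
    (hnear : xt ≤ xl + ε * (xr - xl))
    (hl2 : l2 = xt + max ((2 / ε - 2) * (xt - xl)) (xr - xt)) (hyl : xl ≤ y) (hyr : y ≤ xr)
    (hOt : min (xt - xl) (xr - xt) ≤ O) (hOy : min (y - xt) (xr - y) ≤ O) :
    cost2 (xt, l2) y ≤ (1 / ε - 1) * O := by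
  have hk : 1 ≤ 1 / ε - 1 := by rw [le_sub_iff_add_le, le_div_iff₀ hε0]; linarith
  have ha : xt - xl ≤ O := by
    have : xt - xl ≤ xr - xt := by nlinarith
    exact (min_eq_left this).symm.le.trans hOt
  have hO : O ≤ (1 / ε - 1) * O := le_mul_of_one_le_left (by linarith) hk
  rcases le_total y xt with hy | hy
  · calc cost2 (xt, l2) y ≤ |xt - y| := cost2_le_abs_sub_fst _ _
      _ = xt - y := abs_of_nonneg (by linarith)
      _ ≤ (1 / ε - 1) * O := by linarith
  rcases max_cases ((2 / ε - 2) * (xt - xl)) (xr - xt) with ⟨hm, hge⟩ | ⟨hm, -⟩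
  · rw [hm] at hl2
    calc cost2 (xt, l2) y ≤ min (y - xt) (l2 - y) := cost2_le_min_of_mem_Icc hy (by linarith)
      _ ≤ (l2 - xt) / 2 := by
          linarith [min_le_left (y - xt) (l2 - y), min_le_right (y - xt) (l2 - y)]
      _ = (1 / ε - 1) * (xt - xl) := by rw [hl2]; ring
      _ ≤ (1 / ε - 1) * O := mul_le_mul_of_nonneg_left ha (by linarith)
  · rw [hm, add_sub_cancel] at hl2
    rw [hl2]
    calc cost2 (xt, xr) y ≤ min (y - xt) (xr - y) := cost2_le_min_of_mem_Icc hy hyr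
      _ ≤ (1 / ε - 1) * O := hOy.trans hO

lemma cost2_le_of_near_right (hε0 : 0 < ε) (hε1 : ε < 1 / 2) (hxt : xt ≤ xr)
    (hnear : xl + (1 - ε) * (xr - xl) ≤ xt)
    (hl2 : l2 = xt - max (xt - xl) ((2 / ε - 2) * (xr - xt))) (hyl : xl ≤ y) (hyr : y ≤ xr)
    (hOt : min (xt - xl) (xr - xt) ≤ O) (hOy : min (y - xl) (xt - y) ≤ O) :
    cost2 (xt, l2) y ≤ (1 / ε - 1) * O := by
  rw [← cost2_neg]
  refine cost2_le_of_near_left (xl := -xr) (xr := -xl) hε0 hε1 (by linarith) (by linarith)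
    ?_ (by linarith) (by linarith) ?_ ?_
  · rw [hl2, max_comm]; ring_nf
  · rw [min_comm]; ring_nf at hOt ⊢; linarith
  · rw [min_comm]; ring_nf at hOy ⊢; linarith

lemma cost2_le_of_middle (hε0 : 0 < ε) (hε1 : ε ≤ 1) (hleft : xl + ε * (xr - xl) < xt)
    (hright : xt < xl + (1 - ε) * (xr - xl)) (hyl : xl ≤ y) (hyr : y ≤ xr)
    (hOt : min (xt - xl) (xr - xt) ≤ O) :
    cost2 (xt, l2) y ≤ (1 / ε - 1) * O := by
  have hεO : ε * (xr - xl) ≤ O := (le_min (by linarith) (by linarith)).trans hOt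
  calc cost2 (xt, l2) y ≤ |xt - y| := cost2_le_abs_sub_fst _ _
    _ ≤ (1 - ε) * (xr - xl) := abs_le.2 ⟨by linarith, by linarith⟩
    _ = (1 / ε - 1) * (ε * (xr - xl)) := by field_simp
    _ ≤ (1 / ε - 1) * O :=
        mul_le_mul_of_nonneg_left hεO (by rw [sub_nonneg, le_div_iff₀ hε0]; linarith)

end Cases

lemma cost2_le_of_mech3Out {n : ℕ} {ε : ℝ} (hε0 : 0 < ε) (hε1 : ε < 1 / 2) {t : Fin n}
    {x : Fin n → ℝ} {p : ℝ × ℝ} (hp : Mech3Out ε t x p) (i : Fin n) :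
    cost2 p (x i) ≤ (1 / ε - 1) * OPT x := by
  obtain ⟨l1, l2⟩ := p
  obtain ⟨rfl, hcase⟩ := hp
  have hne : (Finset.univ : Finset (Fin n)).Nonempty := ⟨t, Finset.mem_univ t⟩
  obtain ⟨jl, -, hjl⟩ := Finset.exists_mem_eq_inf' hne x
  obtain ⟨jr, -, hjr⟩ := Finset.exists_mem_eq_sup' hne x
  have hbounds (j : Fin n) : x jl ≤ x j ∧ x j ≤ x jr :=
    ⟨hjl ▸ Finset.inf'_le x (Finset.mem_univ j), hjr ▸ Finset.le_sup' x (Finset.mem_univ j)⟩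
  simp only [hjl, hjr] at hcase
  have hOt := min_sub_le_OPT x jl t jr
  rcases hcase with ⟨hnear, hl2⟩ | ⟨hnear, hl2⟩ | ⟨hleft, hright, -⟩
  · exact cost2_le_of_near_left hε0 hε1 (hbounds t).1 hnear hl2 (hbounds i).1 (hbounds i).2
      hOt (min_sub_le_OPT x t i jr)
  · exact cost2_le_of_near_right hε0 hε1 (hbounds t).2 hnear hl2 (hbounds i).1 (hbounds i).2
      hOt (min_sub_le_OPT x jl i t)
  · exact cost2_le_of_middle hε0 (by linarith) hleft hright (hbounds i).1 (hbounds i).2 hOt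

lemma sum_le_sub_one_mul_of_apply_eq_zero {n : ℕ} {f : Fin n → ℝ} {t : Fin n} {B : ℝ}
    (ht : f t = 0) (hB : ∀ i, f i ≤ B) : ∑ i, f i ≤ ((n : ℝ) - 1) * B := by
  rw [← Finset.sum_erase_add _ _ (Finset.mem_univ t), ht, add_zero]
  calc ∑ i ∈ Finset.univ.erase t, f i ≤ (Finset.univ.erase t).card • B :=
        Finset.sum_le_card_nsmul _ _ _ fun i _ => hB i
    _ = ((n : ℝ) - 1) * B := by
        rw [nsmul_eq_mul, Finset.card_erase_of_mem (Finset.mem_univ t), Finset.card_univ,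
          Fintype.card_fin, Nat.cast_sub t.pos, Nat.cast_one]

/-- Mechanism 3 has approximation ratio at most `(1/ε - 1)·(n - 1)`. -/
theorem stmt14 {n : ℕ} (ε : ℝ) (hε0 : 0 < ε) (hε1 : ε < 1 / 2)
    (t : Fin n) (x : Fin n → ℝ) (p : ℝ × ℝ) (hp : Mech3Out ε t x p) :
    SC p x ≤ (1 / ε - 1) * ((n : ℝ) - 1) * OPT x := by
  have hdictator : cost2 p (x t) = 0 := hp.1 ▸ cost2_fst p
  calc SC p x ≤ ((n : ℝ) - 1) * ((1 / ε - 1) * OPT x) :=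
        sum_le_sub_one_mul_of_apply_eq_zero hdictator (cost2_le_of_mech3Out hε0 hε1 hp)
    _ = (1 / ε - 1) * ((n : ℝ) - 1) * OPT x := by ring
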